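/- arXiv:2311.11823 — 4 statements merged into one kernel-verified Lean document; each statement's English description precedes it below -/
import Mathlib

section
/- Let T be a bounded linear operator between Hilbert spaces X and Y and let α > 0. Then the operator norm of (T*T + αI)^{-1} T* is at most 1/(2√α). -/
/-!
Put `x = B T* y`, so that `T*T x + α x = T* y`. Pairing with `x` gives
`‖T x‖² + α ‖x‖² = ⟪y, T x⟫ ≤ ‖y‖ ‖T x‖ ≤ ‖T x‖² + ‖y‖² / 4`, hence `α ‖x‖² ≤ ‖y‖² / 4`.
-/

open ContinuousLinearMap

section Tikhonov

variable {X Y : Type*} [NormedAddCommGroup X] [InnerProductSpace ℝ X] [CompleteSpace X]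
  [NormedAddCommGroup Y] [InnerProductSpace ℝ Y] [CompleteSpace Y]

lemma norm_apply_sq_add_mul_norm_sq_eq_inner {T : X →L[ℝ] Y} {α : ℝ} {x : X} {y : Y}
    (h : adjoint T (T x) + α • x = adjoint T y) :
    ‖T x‖ ^ 2 + α * ‖x‖ ^ 2 = inner ℝ y (T x) := by
  have hx := congrArg (fun z ↦ inner ℝ z x) h
  simp only [inner_add_left, real_inner_smul_left, adjoint_inner_left,
    real_inner_self_eq_norm_sq] at hx
  exact hx

lemma norm_le_of_tikhonov_normal_eq {T : X →L[ℝ] Y} {α : ℝ} (hα : 0 < α) {x : X} {y : Y}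
    (h : adjoint T (T x) + α • x = adjoint T y) :
    ‖x‖ ≤ 1 / (2 * Real.sqrt α) * ‖y‖ := by
  have hsqrt : 0 < Real.sqrt α := Real.sqrt_pos.mpr hα
  have hcs : ‖T x‖ ^ 2 + α * ‖x‖ ^ 2 ≤ ‖y‖ * ‖T x‖ :=
    (norm_apply_sq_add_mul_norm_sq_eq_inner h).trans_le (real_inner_le_norm y (T x))
  have hsq : (2 * Real.sqrt α * ‖x‖) ^ 2 ≤ ‖y‖ ^ 2 := by
    nlinarith [sq_nonneg (‖y‖ - 2 * ‖T x‖), Real.sq_sqrt hα.le]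
  have hle : 2 * Real.sqrt α * ‖x‖ ≤ ‖y‖ :=
    (pow_le_pow_iff_left₀ (by positivity) (norm_nonneg y) two_ne_zero).mp hsq
  rw [one_div_mul_eq_div, le_div_iff₀' (by positivity)]
  linarith

end Tikhonov

open ContinuousLinearMap in
theorem norm_tikhonov_inv_comp_adjoint_le_general
    {X Y : Type*} [NormedAddCommGroup X] [InnerProductSpace ℝ X] [CompleteSpace X]
    [NormedAddCommGroup Y] [InnerProductSpace ℝ Y] [CompleteSpace Y]
    (T : X →L[ℝ] Y) (α : ℝ) (hα : 0 < α) (B : X →L[ℝ] X)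
    (hB₂ : (adjoint T ∘L T + α • 1) * B = 1) :
    ‖B ∘L adjoint T‖ ≤ 1 / (2 * Real.sqrt α) := by
  refine opNorm_le_bound _ (by positivity) fun y ↦
    norm_le_of_tikhonov_normal_eq (T := T) hα ?_
  simpa using congrArg (fun S ↦ S (adjoint T y)) hB₂

open ContinuousLinearMap in
/-- For a bounded linear operator `T : X → Y` between Hilbert spaces and `α > 0`,
`‖(T*T + αI)⁻¹ T*‖ ≤ 1/(2√α)`.  The inverse is encoded by an operator `B` which is a
two-sided inverse of `T*T + αI`. -/
theorem norm_tikhonov_inv_comp_adjoint_le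
    {X Y : Type*} [NormedAddCommGroup X] [InnerProductSpace ℝ X] [CompleteSpace X]
    [NormedAddCommGroup Y] [InnerProductSpace ℝ Y] [CompleteSpace Y]
    (T : X →L[ℝ] Y) (α : ℝ) (hα : 0 < α) (B : X →L[ℝ] X)
    (hB₁ : B * (adjoint T ∘L T + α • 1) = 1)
    (hB₂ : (adjoint T ∘L T + α • 1) * B = 1) :
    ‖B ∘L adjoint T‖ ≤ 1 / (2 * Real.sqrt α) :=
  norm_tikhonov_inv_comp_adjoint_le_general T α hα B hB₂
end

section
/- Let H ∈ ℝ^{(ℓ+1)×ℓ}, let V_{ℓ} ∈ ℝ^{n×ℓ} and V_{ℓ+1} ∈ ℝ^{n×(ℓ+1)} have orthonormal columns (V_{ℓ+1}* V_{ℓ+1} = I), and define T := V_{ℓ+1} H V_{ℓ}*. Then for every α > 0, (T*T + αI_n)^{-1} V_{ℓ} = V_{ℓ} (H*H + αI_ℓ)^{-1}. -/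
/-!
Writing `Vℓ` for the first `ℓ` columns of `V`, orthonormality of `V` gives
`TᵀT = Vℓ (HᵀH) Vℓᵀ` and `VℓᵀVℓ = I`, hence `(TᵀT + αI) Vℓ = Vℓ (HᵀH + αI)`.
Both Tikhonov matrices are positive definite, so inverting on both sides of this
intertwining relation gives the claim.
-/

open Matrix

namespace Matrix

variable {R : Type*} {k m n : Type*}

theorem inv_mul_eq_mul_inv_of_mul_eq_mul [Fintype m] [Fintype n] [DecidableEq m]
    [DecidableEq n] [CommRing R] {A : Matrix m m R} {B : Matrix n n R} {W : Matrix m n R}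
    (hA : IsUnit A) (hB : IsUnit B) (h : A * W = W * B) : A⁻¹ * W = W * B⁻¹ := by
  rw [isUnit_iff_isUnit_det] at hA hB
  calc A⁻¹ * W = A⁻¹ * (W * B) * B⁻¹ := by
        rw [Matrix.mul_assoc, Matrix.mul_assoc, mul_nonsing_inv _ hB, Matrix.mul_one]
    _ = W * B⁻¹ := by rw [← h, ← Matrix.mul_assoc, nonsing_inv_mul _ hA, Matrix.one_mul]

theorem transpose_mul_self_submatrix_eq_one [Fintype m] [DecidableEq n] [DecidableEq k]
    [CommSemiring R] {V : Matrix m n R} (hV : Vᵀ * V = 1) {e : k → n}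
    (he : Function.Injective e) : (V.submatrix id e)ᵀ * V.submatrix id e = 1 := by
  rw [transpose_submatrix, ← submatrix_mul _ _ _ _ _ Function.bijective_id, hV,
    submatrix_one _ he]

theorem transpose_mul_self_of_orthonormal [Fintype k] [Fintype m] [Fintype n] [DecidableEq n]
    [CommSemiring R] {V : Matrix m n R} (hV : Vᵀ * V = 1) (H : Matrix n k R)
    (W : Matrix m k R) : (V * H * Wᵀ)ᵀ * (V * H * Wᵀ) = W * (Hᵀ * H) * Wᵀ :=
  calc (V * H * Wᵀ)ᵀ * (V * H * Wᵀ) = W * Hᵀ * (Vᵀ * V) * H * Wᵀ := by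
        simp only [transpose_mul, transpose_transpose, Matrix.mul_assoc]
    _ = W * (Hᵀ * H) * Wᵀ := by rw [hV, Matrix.mul_one, Matrix.mul_assoc W]

theorem conj_add_smul_one_mul_of_orthonormal [Fintype k] [Fintype m] [DecidableEq m]
    [DecidableEq k] [CommSemiring R] {W : Matrix m k R} (hW : Wᵀ * W = 1) (G : Matrix k k R)
    (α : R) : (W * G * Wᵀ + α • 1) * W = W * (G + α • 1) := by
  rw [Matrix.add_mul, Matrix.mul_add, Matrix.mul_assoc, Matrix.mul_assoc, hW, Matrix.mul_one,
    Matrix.smul_mul, Matrix.one_mul, Matrix.mul_smul, Matrix.mul_one]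

theorem posDef_transpose_mul_self_add_smul_one [Fintype k] [Fintype m] [DecidableEq k]
    (M : Matrix m k ℝ) {α : ℝ} (hα : 0 < α) : (Mᵀ * M + α • 1).PosDef :=
  PosDef.posSemidef_add (posSemidef_conjTranspose_mul_self M) (PosDef.one.smul hα)

end Matrix

theorem arnoldi_tikhonov_inverse_commute_general
    (n ℓ : ℕ)
    (V : Matrix (Fin n) (Fin (ℓ + 1)) ℝ) (hV : Vᵀ * V = 1)
    (H : Matrix (Fin (ℓ + 1)) (Fin ℓ) ℝ) (α : ℝ) (hα : 0 < α) :
    letI Vℓ : Matrix (Fin n) (Fin ℓ) ℝ := V.submatrix id Fin.castSucc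
    letI T : Matrix (Fin n) (Fin n) ℝ := V * H * Vℓᵀ
    (Tᵀ * T + α • 1)⁻¹ * Vℓ = Vℓ * (Hᵀ * H + α • 1)⁻¹ := by
  set Vℓ := V.submatrix id Fin.castSucc
  set T := V * H * Vℓᵀ
  have hVℓ : Vℓᵀ * Vℓ = 1 :=
    transpose_mul_self_submatrix_eq_one hV (Fin.castSucc_injective ℓ)
  refine inv_mul_eq_mul_inv_of_mul_eq_mul (posDef_transpose_mul_self_add_smul_one T hα).isUnit
    (posDef_transpose_mul_self_add_smul_one H hα).isUnit ?_
  rw [transpose_mul_self_of_orthonormal hV]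
  exact conj_add_smul_one_mul_of_orthonormal hVℓ (Hᵀ * H) α

open Matrix in
/-- Let `H ∈ ℝ^{(ℓ+1)×ℓ}`, `Vℓ₊₁ ∈ ℝ^{n×(ℓ+1)}` with orthonormal columns, `Vℓ` its first
`ℓ` columns, and `T := Vℓ₊₁ H Vℓᵀ`.  Then for `α > 0`,
`(TᵀT + αIₙ)⁻¹ Vℓ = Vℓ (HᵀH + αI_ℓ)⁻¹`. -/
theorem arnoldi_tikhonov_inverse_commute
    (n ℓ : ℕ) (hn : 0 < n) (hℓ : 0 < ℓ) (hle : ℓ ≤ n)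
    (V : Matrix (Fin n) (Fin (ℓ + 1)) ℝ) (hV : Vᵀ * V = 1)
    (H : Matrix (Fin (ℓ + 1)) (Fin ℓ) ℝ) (α : ℝ) (hα : 0 < α) :
    letI Vℓ : Matrix (Fin n) (Fin ℓ) ℝ := V.submatrix id Fin.castSucc
    letI T : Matrix (Fin n) (Fin n) ℝ := V * H * Vℓᵀ
    (Tᵀ * T + α • 1)⁻¹ * Vℓ = Vℓ * (Hᵀ * H + α • 1)⁻¹ :=
  arnoldi_tikhonov_inverse_commute_general n ℓ V hV H α hα
end

section
/- Let T be a bounded linear operator between Hilbert spaces, α > 0, δ ≥ 0, y, y^δ ∈ Y with ‖y − y^δ‖ ≤ δ, and i ≥ 1. If x_{α,i} and x_{α,i}^δ denote the iterated Tikhonov approximations ∑_{k=1}^{i} α^{k-1}(T*T+αI)^{-k} T* y and ∑_{k=1}^{i} α^{k-1}(T*T+αI)^{-k} T* y^δ respectively, then ‖x_{α,i} − x_{α,i}^δ‖ ≤ i δ / (2√α). -/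
/-!
Write `B = (T*T + αI)⁻¹`. Pairing `T*T B x + α B x = x` with `B x` gives
`‖T B x‖² + α ‖B x‖² = ⟪x, B x⟫`, whence `‖α B‖ ≤ 1`; for `x = T* z` the right side is
`⟪z, T B T* z⟫ ≤ ‖z‖ ‖T B T* z‖`, and completing the square in `‖T B T* z‖` gives
`‖B T*‖ ≤ 1 / (2√α)`. So each term `α^k B^(k+1) T* = (α B)^k (B T*)` of the iterated Tikhonov
operator has norm at most `1 / (2√α)`, and by linearity the noise `y - yδ` is amplified by at
most `i / (2√α)`.
-/

open ContinuousLinearMap Finset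

namespace Tikhonov

variable {X Y : Type*} [NormedAddCommGroup X] [InnerProductSpace ℝ X] [CompleteSpace X]
  [NormedAddCommGroup Y] [InnerProductSpace ℝ Y] [CompleteSpace Y]
  {T : X →L[ℝ] Y} {α : ℝ} {B : X →L[ℝ] X}

theorem adjoint_apply_add_smul_apply (hB : (adjoint T ∘L T + α • 1) * B = 1) (x : X) :
    adjoint T (T (B x)) + α • B x = x := by
  simpa using congr($hB x)

theorem norm_sq_add_mul_norm_sq_eq_inner (hB : (adjoint T ∘L T + α • 1) * B = 1) (x : X) :
    ‖T (B x)‖ ^ 2 + α * ‖B x‖ ^ 2 = inner ℝ x (B x) := by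
  rw [← congrArg (inner ℝ · (B x)) (adjoint_apply_add_smul_apply hB x), inner_add_left,
    inner_smul_left, adjoint_inner_left, real_inner_self_eq_norm_sq, real_inner_self_eq_norm_sq,
    RCLike.conj_to_real]

theorem norm_smul_le_one (hα : 0 < α) (hB : (adjoint T ∘L T + α • 1) * B = 1) :
    ‖α • B‖ ≤ 1 := by
  refine opNorm_le_bound _ zero_le_one fun x => ?_
  have hcoercive : α * ‖B x‖ ^ 2 ≤ ‖x‖ * ‖B x‖ := by
    nlinarith [norm_sq_add_mul_norm_sq_eq_inner hB x, real_inner_le_norm x (B x)]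
  rw [smul_apply, norm_smul, Real.norm_of_nonneg hα.le, one_mul]
  rcases (norm_nonneg (B x)).eq_or_lt with h0 | h0
  · simp [← h0]
  · nlinarith

theorem norm_smul_pow_le_one (hα : 0 < α) (hB : (adjoint T ∘L T + α • 1) * B = 1) (k : ℕ) :
    ‖(α • B) ^ k‖ ≤ 1 := by
  induction k with
  | zero => exact norm_id_le
  | succ k ih =>
    rw [pow_succ]
    exact (norm_mul_le _ _).trans (mul_le_one₀ ih (norm_nonneg _) (norm_smul_le_one hα hB))

theorem norm_comp_adjoint_le (hα : 0 < α) (hB : (adjoint T ∘L T + α • 1) * B = 1) :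
    ‖B ∘L adjoint T‖ ≤ 1 / (2 * √α) := by
  refine opNorm_le_bound _ (by positivity) fun z => ?_
  set u := B (adjoint T z)
  have h := norm_sq_add_mul_norm_sq_eq_inner hB (adjoint T z)
  rw [adjoint_inner_left] at h
  have hsq : (2 * √α * ‖u‖) ^ 2 ≤ ‖z‖ ^ 2 := by
    rw [mul_pow, mul_pow, Real.sq_sqrt hα.le]
    nlinarith [real_inner_le_norm z (T u), sq_nonneg (‖T u‖ - ‖z‖ / 2)]
  rw [comp_apply, div_mul_eq_mul_div, one_mul, le_div_iff₀' (by positivity)]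
  exact (pow_le_pow_iff_left₀ (by positivity) (norm_nonneg z) two_ne_zero).mp hsq


theorem norm_smul_pow_comp_adjoint_le (hα : 0 < α) (hB : (adjoint T ∘L T + α • 1) * B = 1)
    (k : ℕ) : ‖α ^ k • (B ^ (k + 1)) ∘L adjoint T‖ ≤ 1 / (2 * √α) := by
  have hfactor : α ^ k • (B ^ (k + 1)) ∘L adjoint T = ((α • B) ^ k) ∘L (B ∘L adjoint T) := by
    rw [smul_pow, pow_succ, ContinuousLinearMap.mul_def, smul_comp, comp_assoc]
  rw [hfactor]
  calc ‖((α • B) ^ k) ∘L (B ∘L adjoint T)‖ ≤ ‖(α • B) ^ k‖ * ‖B ∘L adjoint T‖ :=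
        opNorm_comp_le _ _
    _ ≤ 1 * (1 / (2 * √α)) := by
      gcongr
      exacts [norm_smul_pow_le_one hα hB k, norm_comp_adjoint_le hα hB]
    _ = 1 / (2 * √α) := one_mul _

end Tikhonov

/-- With `B = (T*T + αI)⁻¹`, the map `y ↦ x_{α,i} = ∑_{k=1}^i α^(k-1) B^k T* y`, the index shifted
to start at `0`. -/
noncomputable def iteratedTikhonov {X Y : Type*} [NormedAddCommGroup X] [InnerProductSpace ℝ X]
    [CompleteSpace X] [NormedAddCommGroup Y] [InnerProductSpace ℝ Y] [CompleteSpace Y]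
    (T : X →L[ℝ] Y) (α : ℝ) (B : X →L[ℝ] X) (i : ℕ) : Y →L[ℝ] X :=
  ∑ k ∈ range i, α ^ k • (B ^ (k + 1)) ∘L adjoint T

section iteratedTikhonov

variable {X Y : Type*} [NormedAddCommGroup X] [InnerProductSpace ℝ X] [CompleteSpace X]
  [NormedAddCommGroup Y] [InnerProductSpace ℝ Y] [CompleteSpace Y]
  {T : X →L[ℝ] Y} {α : ℝ} {B : X →L[ℝ] X}

theorem iteratedTikhonov_apply (i : ℕ) (z : Y) :
    iteratedTikhonov T α B i z = ∑ k ∈ range i, α ^ k • (B ^ (k + 1)) (adjoint T z) := by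
  simp [iteratedTikhonov]

theorem norm_iteratedTikhonov_le (hα : 0 < α) (hB : (adjoint T ∘L T + α • 1) * B = 1) (i : ℕ) :
    ‖iteratedTikhonov T α B i‖ ≤ i / (2 * √α) := by
  calc ‖iteratedTikhonov T α B i‖ ≤ ∑ k ∈ range i, ‖α ^ k • (B ^ (k + 1)) ∘L adjoint T‖ :=
        norm_sum_le _ _
    _ ≤ ∑ _k ∈ range i, 1 / (2 * √α) :=
        sum_le_sum fun k _ => Tikhonov.norm_smul_pow_comp_adjoint_le hα hB k
    _ = i / (2 * √α) := by rw [sum_const, card_range, nsmul_eq_mul, mul_one_div]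

end iteratedTikhonov

open ContinuousLinearMap in
theorem iterated_tikhonov_noise_bound_general
    {X Y : Type*} [NormedAddCommGroup X] [InnerProductSpace ℝ X] [CompleteSpace X]
    [NormedAddCommGroup Y] [InnerProductSpace ℝ Y] [CompleteSpace Y]
    (T : X →L[ℝ] Y) (α : ℝ) (hα : 0 < α) (δ : ℝ)
    (y yδ : Y) (hnoise : ‖y - yδ‖ ≤ δ) (i : ℕ)
    (B : X →L[ℝ] X)
    (hB₂ : (adjoint T ∘L T + α • 1) * B = 1) :
    ‖(∑ k ∈ Finset.range i, α ^ k • (B ^ (k + 1)) (adjoint T y)) -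
      ∑ k ∈ Finset.range i, α ^ k • (B ^ (k + 1)) (adjoint T yδ)‖ ≤
      (i : ℝ) * δ / (2 * Real.sqrt α) := by
  rw [← iteratedTikhonov_apply, ← iteratedTikhonov_apply, ← map_sub]
  calc ‖iteratedTikhonov T α B i (y - yδ)‖ ≤ ‖iteratedTikhonov T α B i‖ * ‖y - yδ‖ :=
        le_opNorm _ _
    _ ≤ i / (2 * √α) * δ := by
        gcongr
        exact norm_iteratedTikhonov_le hα hB₂ i
    _ = i * δ / (2 * √α) := by ring

open ContinuousLinearMap in
/-- Noise-propagation bound for iterated Tikhonov: if `‖y − yδ‖ ≤ δ`, then the iterated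
Tikhonov approximations built from `y` and `yδ` satisfy
`‖x_{α,i} − x_{α,i}^δ‖ ≤ i δ / (2√α)`. -/
theorem iterated_tikhonov_noise_bound
    {X Y : Type*} [NormedAddCommGroup X] [InnerProductSpace ℝ X] [CompleteSpace X]
    [NormedAddCommGroup Y] [InnerProductSpace ℝ Y] [CompleteSpace Y]
    (T : X →L[ℝ] Y) (α : ℝ) (hα : 0 < α) (δ : ℝ) (hδ : 0 ≤ δ)
    (y yδ : Y) (hnoise : ‖y - yδ‖ ≤ δ) (i : ℕ) (hi : 1 ≤ i)
    (B : X →L[ℝ] X)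
    (hB₁ : B * (adjoint T ∘L T + α • 1) = 1)
    (hB₂ : (adjoint T ∘L T + α • 1) * B = 1) :
    ‖(∑ k ∈ Finset.range i, α ^ k • (B ^ (k + 1)) (adjoint T y)) -
      ∑ k ∈ Finset.range i, α ^ k • (B ^ (k + 1)) (adjoint T yδ)‖ ≤
      (i : ℝ) * δ / (2 * Real.sqrt α) :=
  iterated_tikhonov_noise_bound_general T α hα δ y yδ hnoise i B hB₂
end

section
/- Let Σ ∈ ℝ^{(ℓ+1)×ℓ} be a diagonal (rectangular) matrix with nonnegative entries, ŷ ∈ ℝ^{ℓ+1} a nonzero vector supported on the indices of nonzero singular values, and i ≥ 1. Then the function g(α) := α^{2i+1} ŷ* (ΣΣ* + αI_{ℓ+1})^{−2i−1} ŷ is continuous and strictly increasing on (0, ∞) with lim_{α→0⁺} g(α) = 0 and lim_{α→∞} g(α) = ‖ŷ‖², and hence for every c with 0 < c < ‖ŷ‖ the equation g(α) = c² has a unique solution α > 0. -/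
open Matrix Filter Topology in
/-- The parameter-choice function `g(α) = α^{2i+1} ŷ* (ΣΣ* + αI)^{−(2i+1)} ŷ`, for a
rectangular diagonal matrix `Σ` with nonnegative entries and a nonzero vector `ŷ`
supported on indices of nonzero singular values, is continuous and strictly increasing
on `(0,∞)`, tends to `0` as `α → 0⁺` and to `‖ŷ‖²` as `α → ∞`; consequently, for every
`c` with `0 < c < ‖ŷ‖` the equation `g(α) = c²` has a unique solution `α > 0`. -/
theorem parameter_choice_unique_solution
    (ℓ : ℕ) (hℓ : 1 ≤ ℓ) (i : ℕ) (hi : 1 ≤ i)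
    (S : Matrix (Fin (ℓ + 1)) (Fin ℓ) ℝ)
    (hdiag : ∀ (k : Fin (ℓ + 1)) (j : Fin ℓ), S k j ≠ 0 → (k : ℕ) = (j : ℕ))
    (hnonneg : ∀ (k : Fin (ℓ + 1)) (j : Fin ℓ), 0 ≤ S k j)
    (yhat : Fin (ℓ + 1) → ℝ) (hy : yhat ≠ 0)
    (hsupp : ∀ k : Fin (ℓ + 1), yhat k ≠ 0 →
      ∃ j : Fin ℓ, Fin.castSucc j = k ∧ S (Fin.castSucc j) j ≠ 0)
    (c : ℝ) (hc : 0 < c) (hc2 : c ^ 2 < yhat ⬝ᵥ yhat) :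
    letI g : ℝ → ℝ := fun α =>
      α ^ (2 * i + 1) * (yhat ⬝ᵥ (((S * Sᵀ + α • 1)⁻¹ ^ (2 * i + 1)) *ᵥ yhat))
    StrictMonoOn g (Set.Ioi 0) ∧ ContinuousOn g (Set.Ioi 0) ∧
      Tendsto g (𝓝[>] 0) (𝓝 0) ∧ Tendsto g atTop (𝓝 (yhat ⬝ᵥ yhat)) ∧
      ∃! α : ℝ, 0 < α ∧ g α = c ^ 2 := by
  set g : ℝ → ℝ := fun α =>
      α ^ (2 * i + 1) * (yhat ⬝ᵥ (((S * Sᵀ + α • 1)⁻¹ ^ (2 * i + 1)) *ᵥ yhat)) with hgdef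
  set n : ℕ := 2 * i + 1 with hn
  have hn1 : 1 ≤ n := by omega
  have hnne : n ≠ 0 := by omega
  -- the diagonal entries of S Sᵀ
  set d : Fin (ℓ + 1) → ℝ := fun k => ∑ j, S k j ^ 2 with hd
  have hd0 : ∀ k, 0 ≤ d k := fun k => Finset.sum_nonneg fun j _ => sq_nonneg _
  have hdpos : ∀ k, yhat k ≠ 0 → 0 < d k := by
    intro k hk
    obtain ⟨j, hj1, hj2⟩ := hsupp k hk
    have h1 : (0:ℝ) < S k j ^ 2 := by
      rw [← hj1]; exact pow_pos (lt_of_le_of_ne (hnonneg _ _) (Ne.symm hj2)) 2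
    calc (0:ℝ) < S k j ^ 2 := h1
      _ ≤ d k := Finset.single_le_sum (fun j' _ => sq_nonneg (S k j')) (Finset.mem_univ j)
  -- S * Sᵀ is diagonal
  have hSS : S * Sᵀ = Matrix.diagonal d := by
    ext k k'
    by_cases hkk : k = k'
    · subst hkk
      simp [Matrix.mul_apply, Matrix.transpose_apply, hd, sq]
    · rw [Matrix.diagonal_apply_ne _ hkk, Matrix.mul_apply]
      apply Finset.sum_eq_zero
      intro j _
      rw [Matrix.transpose_apply]
      by_cases h1 : S k j = 0
      · rw [h1, zero_mul]
      · by_cases h2 : S k' j = 0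
        · rw [h2, mul_zero]
        · exact absurd (Fin.ext ((hdiag k j h1).trans (hdiag k' j h2).symm)) hkk
  -- key pointwise formula for g on the positive axis
  have hkey : ∀ α : ℝ, 0 < α →
      g α = ∑ k, yhat k ^ 2 * (α / (d k + α)) ^ n := by
    intro α hα
    have hepos : ∀ k, 0 < d k + α := fun k => add_pos_of_nonneg_of_pos (hd0 k) hα
    have hinv : (Matrix.diagonal (fun k => d k + α))⁻¹
        = Matrix.diagonal (fun k => (d k + α)⁻¹) := by
      apply Matrix.inv_eq_right_inv
      rw [Matrix.diagonal_mul_diagonal, ← Matrix.diagonal_one]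
      exact congrArg Matrix.diagonal (funext fun k => mul_inv_cancel₀ (hepos k).ne')
    have : g α = α ^ n * (yhat ⬝ᵥ
        ((Matrix.diagonal fun k => ((d k + α)⁻¹) ^ n) *ᵥ yhat)) := by
      show α ^ n * _ = _
      rw [hSS, Matrix.smul_one_eq_diagonal, Matrix.diagonal_add, hinv,
        Matrix.diagonal_pow]
      rfl
    rw [this]
    rw [dotProduct, Finset.mul_sum]
    apply Finset.sum_congr rfl
    intro k _
    rw [Matrix.mulVec_diagonal, div_pow, div_eq_mul_inv, ← inv_pow]
    ring
  -- the scalar model h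
  set h : ℝ → ℝ := fun α => ∑ k, yhat k ^ 2 * (α / (d k + α)) ^ n with hhdef
  have hgh : ∀ α ∈ Set.Ioi (0:ℝ), g α = h α := fun α hα => hkey α hα
  -- some vector facts
  obtain ⟨k0, hk0⟩ : ∃ k, yhat k ≠ 0 := Function.ne_iff.mp hy
  -- strict monotonicity of h
  have hratio_le : ∀ (k : Fin (ℓ+1)) (a b : ℝ), 0 < a → a ≤ b →
      a / (d k + a) ≤ b / (d k + b) := by
    intro k a b ha hab
    have hb : 0 < b := lt_of_lt_of_le ha hab
    rw [div_le_div_iff₀ (add_pos_of_nonneg_of_pos (hd0 k) ha)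
      (add_pos_of_nonneg_of_pos (hd0 k) hb)]
    nlinarith [hd0 k]
  have hratio_nonneg : ∀ (k : Fin (ℓ+1)) (a : ℝ), 0 < a → 0 ≤ a / (d k + a) :=
    fun k a ha => div_nonneg ha.le (add_pos_of_nonneg_of_pos (hd0 k) ha).le
  have hmono : StrictMonoOn h (Set.Ioi 0) := by
    intro a ha b hb hab
    simp only [Set.mem_Ioi] at ha hb
    apply Finset.sum_lt_sum
    · intro k _
      exact mul_le_mul_of_nonneg_left
        (pow_le_pow_left₀ (hratio_nonneg k a ha) (hratio_le k a b ha hab.le) n)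
        (sq_nonneg _)
    · refine ⟨k0, Finset.mem_univ _, ?_⟩
      have hdk : 0 < d k0 := hdpos k0 hk0
      have hlt : a / (d k0 + a) < b / (d k0 + b) := by
        rw [div_lt_div_iff₀ (add_pos_of_nonneg_of_pos (hd0 k0) ha)
          (add_pos_of_nonneg_of_pos (hd0 k0) hb)]
        nlinarith
      exact mul_lt_mul_of_pos_left
        (pow_lt_pow_left₀ hlt (hratio_nonneg k0 a ha) hnne)
        (by positivity)
  -- continuity of h on (0,∞)
  have hcont : ContinuousOn h (Set.Ioi 0) := by
    apply continuousOn_finset_sum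
    intro k _
    apply ContinuousOn.mul continuousOn_const
    apply ContinuousOn.pow
    exact ContinuousOn.div continuousOn_id (continuousOn_const.add continuousOn_id)
      (fun α hα => (add_pos_of_nonneg_of_pos (hd0 k) hα).ne')
  -- limit at 0⁺
  have hlim0 : Tendsto h (𝓝[>] 0) (𝓝 0) := by
    have : Tendsto h (𝓝[>] 0) (𝓝 (∑ k : Fin (ℓ+1), (0:ℝ))) := by
      apply tendsto_finset_sum
      intro k _
      by_cases hk : yhat k = 0
      · simp only [hhdef, hk]
        simpa using tendsto_const_nhds
      · have hdk : 0 < d k := hdpos k hk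
        have hc0 : Tendsto (fun α : ℝ => yhat k ^ 2 * (α / (d k + α)) ^ n) (𝓝 0)
            (𝓝 (yhat k ^ 2 * ((0:ℝ) / (d k + 0)) ^ n)) := by
          apply Tendsto.mul tendsto_const_nhds
          apply Tendsto.pow
          exact Tendsto.div tendsto_id (tendsto_const_nhds.add tendsto_id)
            (by simpa using hdk.ne')
        have : yhat k ^ 2 * ((0:ℝ) / (d k + 0)) ^ n = 0 := by
          rw [zero_div, zero_pow hnne, mul_zero]
        rw [this] at hc0
        exact hc0.mono_left nhdsWithin_le_nhds
    simpa using this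
  -- limit at ∞
  have hlimtop : Tendsto h atTop (𝓝 (yhat ⬝ᵥ yhat)) := by
    have hterm : ∀ k : Fin (ℓ+1),
        Tendsto (fun α : ℝ => yhat k ^ 2 * (α / (d k + α)) ^ n) atTop
          (𝓝 (yhat k * yhat k)) := by
      intro k
      have h1 : Tendsto (fun α : ℝ => (1 + d k * α⁻¹)⁻¹) atTop (𝓝 1) := by
        have : Tendsto (fun α : ℝ => 1 + d k * α⁻¹) atTop (𝓝 (1 + d k * 0)) :=
          tendsto_const_nhds.add (tendsto_const_nhds.mul tendsto_inv_atTop_zero)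
        simp only [mul_zero, add_zero] at this
        simpa using this.inv₀ one_ne_zero
      have heq : (fun α : ℝ => α / (d k + α)) =ᶠ[atTop]
          fun α => (1 + d k * α⁻¹)⁻¹ := by
        filter_upwards [eventually_gt_atTop (0:ℝ)] with α hα
        have hda : 0 < d k + α := add_pos_of_nonneg_of_pos (hd0 k) hα
        rw [eq_comm, inv_eq_iff_eq_inv, inv_div]
        field_simp
        ring
      have h2 : Tendsto (fun α : ℝ => α / (d k + α)) atTop (𝓝 1) :=
        Tendsto.congr' heq.symm h1
      have h3 : Tendsto (fun α : ℝ => yhat k ^ 2 * (α / (d k + α)) ^ n) atTop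
          (𝓝 (yhat k ^ 2 * 1 ^ n)) := tendsto_const_nhds.mul (h2.pow n)
      simpa [sq] using h3
    have := tendsto_finset_sum Finset.univ (fun k _ => hterm k)
    simpa [dotProduct] using this
  -- existence and uniqueness of the solution
  have hexun : ∃! α : ℝ, 0 < α ∧ g α = c ^ 2 := by
    have hcpos : (0:ℝ) < c ^ 2 := by positivity
    -- find a with h a < c^2
    obtain ⟨a, ha1, ha2⟩ : ∃ a : ℝ, 0 < a ∧ h a < c ^ 2 := by
      have := (hlim0.eventually (gt_mem_nhds hcpos)).and self_mem_nhdsWithin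
      obtain ⟨a, ha2, ha1⟩ := this.exists
      exact ⟨a, ha1, ha2⟩
    -- find b with h b > c^2
    obtain ⟨b, hb1, hb2⟩ : ∃ b : ℝ, a < b ∧ c ^ 2 < h b := by
      have := (hlimtop.eventually (lt_mem_nhds hc2)).and (eventually_gt_atTop a)
      obtain ⟨b, hb2, hb1⟩ := this.exists
      exact ⟨b, hb1, hb2⟩
    have hbpos : 0 < b := ha1.trans hb1
    have hsub : Set.Icc a b ⊆ Set.Ioi (0:ℝ) := fun x hx => ha1.trans_le hx.1
    have hIVT := intermediate_value_Icc hb1.le (hcont.mono hsub)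
    have hmem : c ^ 2 ∈ Set.Icc (h a) (h b) := ⟨ha2.le, hb2.le⟩
    obtain ⟨α, hαmem, hα⟩ := hIVT hmem
    have hαpos : 0 < α := ha1.trans_le hαmem.1
    refine ⟨α, ⟨hαpos, by rw [hgh α hαpos, hα]⟩, ?_⟩
    intro β ⟨hβpos, hβ⟩
    apply hmono.injOn hβpos hαpos
    rw [← hgh β hβpos, ← hgh α hαpos, hβ, hgh α hαpos, hα]
  refine ⟨?_, ?_, ?_, ?_, hexun⟩
  · intro a ha b hb hab
    rw [hgh a ha, hgh b hb]
    exact hmono ha hb hab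
  · exact ContinuousOn.congr hcont hgh
  · exact hlim0.congr' (by
      filter_upwards [self_mem_nhdsWithin] with α hα using (hgh α hα).symm)
  · apply hlimtop.congr'
    filter_upwards [eventually_gt_atTop (0:ℝ)] with α hα using (hgh α hα).symm
end
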